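/- arXiv:1303.4278 — 8 statements merged into one kernel-verified Lean document; each statement's English description precedes it below -/
import Mathlib

section
/- Let E be a real inner product space, let s be a positive integer, and let L₁ < 0 be a real number. If H : Fin s → E is a family of vectors such that ⟨H α, H β⟩ = L₁ for all α ≠ β, then the linear span of {H α : α ∈ Fin s} has dimension at least s − 1. -/
open scoped RealInnerProductSpace

/-!
The Gram matrix of the family is `D + L₁ J` with `D` diagonal with positive entries
`‖H α‖² - L₁` and `J` the all-ones matrix. Pairing a linear relation `∑ c α • H α = 0` with
each `H β` gives `c β (‖H β‖² - L₁) = -L₁ ∑ c α`, so every relation is a multiple of the single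
vector `((‖H β‖² - L₁)⁻¹)_β`. The relations thus form a space of dimension at most one, and
rank–nullity gives the bound.
-/

namespace InnerProductSpace

variable {ι E : Type*} [Fintype ι] [NormedAddCommGroup E] [InnerProductSpace ℝ E]
  {v : ι → E} {a : ℝ}

theorem inner_sum_smul_of_pairwise_inner_eq (hv : ∀ i j, i ≠ j → ⟪v i, v j⟫ = a)
    (c : ι → ℝ) (j : ι) :
    ⟪v j, ∑ i, c i • v i⟫ = c j * (⟪v j, v j⟫ - a) + a * ∑ i, c i := by
  have only_diagonal : ∑ i, c i * (⟪v j, v i⟫ - a) = c j * (⟪v j, v j⟫ - a) :=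
    Finset.sum_eq_single j (fun i _ hij => by rw [hv j i (Ne.symm hij), sub_self, mul_zero])
      (by simp)
  simp only [inner_sum, real_inner_smul_right, Finset.mul_sum, ← only_diagonal,
    ← Finset.sum_add_distrib]
  exact Finset.sum_congr rfl fun i _ => by ring

theorem ker_linearCombination_le_span_singleton_of_pairwise_inner_eq
    (hv : ∀ i j, i ≠ j → ⟪v i, v j⟫ = a) (hdiag : ∀ i, a < ⟪v i, v i⟫) :
    LinearMap.ker (Fintype.linearCombination ℝ v) ≤
      Submodule.span ℝ {fun i => (⟪v i, v i⟫ - a)⁻¹} := by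
  intro c hc
  rw [LinearMap.mem_ker, Fintype.linearCombination_apply] at hc
  rw [Submodule.mem_span_singleton]
  refine ⟨-a * ∑ i, c i, funext fun j => ?_⟩
  have hrel := inner_sum_smul_of_pairwise_inner_eq hv c j
  rw [hc, inner_zero_right] at hrel
  have hpos : ⟪v j, v j⟫ - a ≠ 0 := (sub_pos.2 (hdiag j)).ne'
  simp only [Pi.smul_apply, smul_eq_mul]
  field_simp
  linarith

theorem card_sub_one_le_finrank_span_of_pairwise_inner_eq
    (hv : ∀ i j, i ≠ j → ⟪v i, v j⟫ = a) (hdiag : ∀ i, a < ⟪v i, v i⟫) :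
    Fintype.card ι - 1 ≤ Module.finrank ℝ (Submodule.span ℝ (Set.range v)) := by
  set f := Fintype.linearCombination ℝ v
  have hker : Module.finrank ℝ (LinearMap.ker f) ≤ 1 :=
    (Submodule.finrank_mono
      (ker_linearCombination_le_span_singleton_of_pairwise_inner_eq hv hdiag)).trans
      ((finrank_span_le_card _).trans (by simp))
  have hrank := LinearMap.finrank_range_add_finrank_ker f
  rw [Fintype.range_linearCombination, Module.finrank_fintype_fun_eq_card] at hrank
  omega

end InnerProductSpace

theorem span_finrank_ge_of_pairwise_inner_neg_general
    {E : Type*} [NormedAddCommGroup E] [InnerProductSpace ℝ E]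
    (s : ℕ) (L₁ : ℝ) (hL : L₁ < 0)
    (H : Fin s → E) (hH : ∀ α β : Fin s, α ≠ β → ⟪H α, H β⟫ = L₁) :
    s - 1 ≤ Module.finrank ℝ (Submodule.span ℝ (Set.range H)) := by
  have hdiag : ∀ α, L₁ < ⟪H α, H α⟫ := fun α => hL.trans_le real_inner_self_nonneg
  simpa using InnerProductSpace.card_sub_one_le_finrank_span_of_pairwise_inner_eq hH hdiag

/-- If `H : Fin s → E` is a family of vectors in a real inner product space
with `⟪H α, H β⟫ = L₁ < 0` for all `α ≠ β`, then the span of the `H α`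
has dimension at least `s - 1`. -/
theorem span_finrank_ge_of_pairwise_inner_neg
    {E : Type*} [NormedAddCommGroup E] [InnerProductSpace ℝ E]
    (s : ℕ) (hs : 0 < s) (L₁ : ℝ) (hL : L₁ < 0)
    (H : Fin s → E) (hH : ∀ α β : Fin s, α ≠ β → ⟪H α, H β⟫ = L₁) :
    s - 1 ≤ Module.finrank ℝ (Submodule.span ℝ (Set.range H)) :=
  span_finrank_ge_of_pairwise_inner_neg_general s L₁ hL H hH
end

section
/- Let s be a positive integer and L₁ < 0 a real number. Every real s×s matrix whose off-diagonal entries all equal L₁ and whose diagonal entries are all nonnegative has rank at least s − 1. -/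
/-- Every real `s × s` matrix whose off-diagonal entries all equal a negative
constant `L₁` and whose diagonal entries are all nonnegative has rank at
least `s - 1`. -/
theorem rank_ge_of_offdiag_neg_diag_nonneg
    (s : ℕ) (hs : 0 < s) (L₁ : ℝ) (hL : L₁ < 0)
    (A : Matrix (Fin s) (Fin s) ℝ)
    (hoff : ∀ i j : Fin s, i ≠ j → A i j = L₁)
    (hdiag : ∀ i : Fin s, 0 ≤ A i i) :
    s - 1 ≤ A.rank := by
  classical
  set K := LinearMap.ker A.mulVecLin with hK
  have hker : ∀ v, A.mulVecLin v = 0 → (∑ j, v j) = 0 → v = 0 := by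
    intro v hv hsum
    funext i
    have h0 : A.mulVec v i = 0 := by
      have := congrFun hv i
      simpa using this
    have hsplit : A.mulVec v i
        = A i i * v i + ∑ j ∈ Finset.univ.erase i, A i j * v j := by
      rw [Matrix.mulVec, dotProduct]
      exact (Finset.add_sum_erase _ _ (Finset.mem_univ i)).symm
    have herase : ∑ j ∈ Finset.univ.erase i, A i j * v j
        = L₁ * (∑ j, v j) - L₁ * v i := by
      have : ∑ j ∈ Finset.univ.erase i, A i j * v j
          = ∑ j ∈ Finset.univ.erase i, L₁ * v j := by
        refine Finset.sum_congr rfl fun j hj => ?_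
        have hji : j ≠ i := (Finset.mem_erase.mp hj).1
        rw [hoff i j (Ne.symm hji)]
      rw [this, ← Finset.mul_sum, Finset.sum_erase_eq_sub (Finset.mem_univ i),
        mul_sub]
    have hkey : (A i i - L₁) * v i = 0 := by
      have := h0
      rw [hsplit, herase, hsum] at this
      nlinarith [this]
    have hpos : 0 < A i i - L₁ := by
      have := hdiag i; linarith
    have := mul_eq_zero.mp hkey
    rcases this with h | h
    · exact absurd h (ne_of_gt hpos)
    · simpa using h
  let Ssum : (Fin s → ℝ) →ₗ[ℝ] ℝ := ∑ j, LinearMap.proj j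
  have hinj : Function.Injective (Ssum.comp K.subtype) := by
    rw [← LinearMap.ker_eq_bot, Submodule.eq_bot_iff]
    rintro ⟨v, hv⟩ h
    have hsum : (∑ j, v j) = 0 := by
      simpa [Ssum, LinearMap.sum_apply] using h
    have hv0 : A.mulVecLin v = 0 := hv
    exact Subtype.ext (hker v hv0 hsum)
  have hk1 : Module.finrank ℝ K ≤ 1 := by
    have := LinearMap.finrank_le_finrank_of_injective hinj
    simpa using this
  have hrn := LinearMap.finrank_range_add_finrank_ker A.mulVecLin
  have hpi : Module.finrank ℝ (Fin s → ℝ) = s := by simp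
  rw [hpi] at hrn
  have heq : Matrix.rank A = Module.finrank ℝ (LinearMap.range A.mulVecLin) := rfl
  rw [← heq, ← hK] at hrn
  omega
end

section
/- Let s ≥ 1 and r ≥ 1 be integers, let n₁, …, n_s be positive integers, let L₁ < 0 be a real number, and set n := n₁ + ⋯ + n_s + s + r − 1. Let H be an invertible s×s real matrix with H α β = L₁ for all α ≠ β, and suppose the row sums of its inverse satisfy Σ_β (H⁻¹) α β = −(n_α + 1)/(r·L₁) for every α. Then the diagonal entries of H are H γ γ = ((n − n_γ)/(n_γ + 1))·(−L₁) for every γ. -/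
/-! The row sums `c = H⁻¹ *ᵥ 1` satisfy `H *ᵥ c = 1`. As the off-diagonal entries of `H` all equal
`L₁`, row `γ` of this identity reads `H γ γ * c γ + L₁ * (∑ c - c γ) = 1`, and `∑ c` is known from the
prescribed row sums, so it can be solved for `H γ γ`. -/

open Finset

namespace Matrix

variable {ι R : Type*} [Fintype ι] [DecidableEq ι]

theorem mulVec_apply_of_offDiag_eq [Ring R] {H : Matrix ι ι R} {a : R}
    (hoff : ∀ i j, i ≠ j → H i j = a) (v : ι → R) (i : ι) :
    (H *ᵥ v) i = H i i * v i + a * (∑ j, v j - v i) := by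
  rw [mulVec, dotProduct, ← add_sum_erase _ _ (mem_univ i), ← sum_erase_eq_sub (mem_univ i),
    mul_sum]
  congr 1
  exact sum_congr rfl fun j hj => by rw [hoff i j (ne_of_mem_erase hj).symm]

theorem mulVec_nonsing_inv_mulVec [CommRing R] {H : Matrix ι ι R} (hH : IsUnit H.det)
    (v : ι → R) : H *ᵥ (H⁻¹ *ᵥ v) = v := by
  rw [mulVec_mulVec, mul_nonsing_inv H hH, one_mulVec]

theorem diag_mul_inv_rowSum_of_offDiag_eq [CommRing R] {H : Matrix ι ι R} {a : R}
    (hH : IsUnit H.det) (hoff : ∀ i j, i ≠ j → H i j = a) (i : ι) :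
    H i i * ∑ j, H⁻¹ i j + a * (∑ k, ∑ j, H⁻¹ k j - ∑ j, H⁻¹ i j) = 1 := by
  have h := congrFun (mulVec_nonsing_inv_mulVec hH 1) i
  rw [mulVec_apply_of_offDiag_eq hoff] at h
  simpa only [mulVec, dotProduct, Pi.one_apply, mul_one] using h

end Matrix

theorem gram_diag_of_inv_row_sums_general
    (s r : ℕ) (hr : 1 ≤ r)
    (nn : Fin s → ℕ)
    (L₁ : ℝ) (hL : L₁ < 0)
    (n : ℕ) (hn : n = (∑ α, nn α) + s + r - 1)
    (H : Matrix (Fin s) (Fin s) ℝ) (hdet : IsUnit H.det)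
    (hHoff : ∀ α β, α ≠ β → H α β = L₁)
    (hrow : ∀ α, ∑ β, H⁻¹ α β = -((nn α : ℝ) + 1) / ((r : ℝ) * L₁)) :
    ∀ γ, H γ γ = (((n : ℝ) - (nn γ : ℝ)) / ((nn γ : ℝ) + 1)) * (-L₁) := by
  intro γ
  have key := Matrix.diag_mul_inv_rowSum_of_offDiag_eq hdet hHoff γ
  have hsum : ∑ α, -((nn α : ℝ) + 1) / ((r : ℝ) * L₁) = -((n : ℝ) + 1 - r) / (r * L₁) := by
    rw [← sum_div, sum_neg_distrib, sum_add_distrib, hn, Nat.cast_sub (by omega)]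
    simp
  simp only [hrow, hsum] at key
  have hr0 : (r : ℝ) ≠ 0 := by positivity
  have hL0 : L₁ ≠ 0 := hL.ne
  field_simp at key
  rw [div_mul_eq_mul_div, eq_div_iff (by positivity)]
  linear_combination -key

/-- If `H` is an invertible real `s × s` matrix with all off-diagonal entries
equal to `L₁ < 0`, and the row sums of its inverse are `-(n_α + 1)/(r·L₁)`,
then the diagonal entries of `H` are `((n - n_γ)/(n_γ + 1))·(-L₁)`. -/
theorem gram_diag_of_inv_row_sums
    (s r : ℕ) (hs : 1 ≤ s) (hr : 1 ≤ r)
    (nn : Fin s → ℕ) (hnn : ∀ α, 0 < nn α)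
    (L₁ : ℝ) (hL : L₁ < 0)
    (n : ℕ) (hn : n = (∑ α, nn α) + s + r - 1)
    (H : Matrix (Fin s) (Fin s) ℝ) (hdet : IsUnit H.det)
    (hHoff : ∀ α β, α ≠ β → H α β = L₁)
    (hrow : ∀ α, ∑ β, H⁻¹ α β = -((nn α : ℝ) + 1) / ((r : ℝ) * L₁)) :
    ∀ γ, H γ γ = (((n : ℝ) - (nn γ : ℝ)) / ((nn γ : ℝ) + 1)) * (-L₁) :=
  gram_diag_of_inv_row_sums_general s r hr nn L₁ hL n hn H hdet hHoff hrow
end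

section
/- With the notation and hypotheses (i), (ii), (iv) of the context (linear independence of H, total symmetry of ⟨σ(·,·),·⟩, σ(X, H α) = ⟨X, H α⟩·H α + L₁·X, and trace condition Σ_i σ(e_i, e_i) = −Σ_α n_α·H α), one has ‖H γ‖² = ((n − n_γ)/(n_γ + 1))·(−L₁) for every γ, where n := dim E + n₁ + ⋯ + n_s. -/
open scoped RealInnerProductSpace

/-- Under Naitoh's structure equations (total symmetry of the cubic form,
`σ(X, H α) = ⟪X, H α⟫ • H α + L₁ • X`, and the trace condition
`∑ᵢ σ(eᵢ, eᵢ) = -∑_α n_α • H α`), the mean curvature vectors satisfy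
`‖H γ‖² = ((n - n_γ)/(n_γ + 1))·(-L₁)` where `n = dim E + n₁ + ⋯ + n_s`. -/
theorem norm_sq_mean_curvature
    {E : Type*} [NormedAddCommGroup E] [InnerProductSpace ℝ E]
    [FiniteDimensional ℝ E]
    (s : ℕ) (hs : 1 ≤ s) (L₁ : ℝ) (hL : L₁ < 0)
    (nn : Fin s → ℕ) (hnn : ∀ α, 0 < nn α)
    (H : Fin s → E) (hind : LinearIndependent ℝ H)
    (hHL : ∀ α β, α ≠ β → ⟪H α, H β⟫ = L₁)
    (σ : E →ₗ[ℝ] E →ₗ[ℝ] E)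
    (hsymm : ∀ X Y : E, σ X Y = σ Y X)
    (htri : ∀ X Y Z : E, ⟪σ X Y, Z⟫ = ⟪σ X Z, Y⟫)
    (hii : ∀ (X : E) (α : Fin s), σ X (H α) = ⟪X, H α⟫ • H α + L₁ • X)
    (b : OrthonormalBasis (Fin (Module.finrank ℝ E)) ℝ E)
    (hiv : ∑ i, σ (b i) (b i) = -∑ α, (nn α : ℝ) • H α) :
    ∀ γ, ‖H γ‖ ^ 2 =
      (((Module.finrank ℝ E + ∑ α, nn α : ℕ) : ℝ) - (nn γ : ℝ)) / ((nn γ : ℝ) + 1)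
        * (-L₁) := by
  intro γ
  set d : ℝ := (Module.finrank ℝ E : ℝ)
  -- LHS of trace identity paired with H γ
  have hLHS : ⟪∑ i, σ (b i) (b i), H γ⟫ = ‖H γ‖ ^ 2 + L₁ * d := by
    rw [sum_inner]
    have : ∀ i, ⟪σ (b i) (b i), H γ⟫ = ⟪H γ, b i⟫ * ⟪b i, H γ⟫ + L₁ := by
      intro i
      rw [htri, hii]
      rw [inner_add_left, real_inner_smul_left, real_inner_smul_left]
      have hb : ⟪b i, b i⟫ = (1 : ℝ) := by
        rw [real_inner_self_eq_norm_sq, b.orthonormal.1 i]; norm_num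
      rw [hb, real_inner_comm (b i) (H γ)]
      ring
    simp only [this, Finset.sum_add_distrib, b.sum_inner_mul_inner,
      Finset.sum_const, Finset.card_univ, Fintype.card_fin, nsmul_eq_mul]
    rw [real_inner_self_eq_norm_sq]
    ring
  -- RHS of trace identity paired with H γ
  have hRHS : ⟪-∑ α, (nn α : ℝ) • H α, H γ⟫
      = -((nn γ : ℝ) * ‖H γ‖ ^ 2 + ((∑ α, (nn α : ℕ) : ℕ) - (nn γ : ℕ) : ℝ) * L₁) := by
    rw [inner_neg_left, sum_inner]
    have hsplit : ∑ α, ⟪(nn α : ℝ) • H α, H γ⟫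
        = (nn γ : ℝ) * ‖H γ‖ ^ 2 + ∑ α ∈ Finset.univ.erase γ, (nn α : ℝ) * L₁ := by
      rw [← Finset.add_sum_erase _ _ (Finset.mem_univ γ)]
      congr 1
      · rw [real_inner_smul_left, real_inner_self_eq_norm_sq]
      · apply Finset.sum_congr rfl
        intro α hα
        rw [real_inner_smul_left, hHL α γ (Finset.ne_of_mem_erase hα)]
    rw [hsplit]
    have hsum : ∑ α ∈ Finset.univ.erase γ, (nn α : ℝ) * L₁
        = ((∑ α, (nn α : ℕ) : ℕ) - (nn γ : ℕ) : ℝ) * L₁ := by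
      rw [← Finset.sum_mul]
      congr 1
      have := Finset.add_sum_erase Finset.univ (fun α => (nn α : ℝ)) (Finset.mem_univ γ)
      push_cast
      linarith [this]
    rw [hsum]
  have key : ‖H γ‖ ^ 2 + L₁ * d
      = -((nn γ : ℝ) * ‖H γ‖ ^ 2 + ((∑ α, (nn α : ℕ) : ℕ) - (nn γ : ℕ) : ℝ) * L₁) := by
    rw [← hLHS, ← hRHS, hiv]
  have hne : (nn γ : ℝ) + 1 ≠ 0 := by positivity
  field_simp
  push_cast at key ⊢
  ring_nf at key ⊢
  linarith [key]
end

section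
/- With the notation and hypotheses (i), (ii), (iv) of the context, assume moreover that dim W ≥ 1. Then for all X, Y ∈ W, the orthogonal projection of σ(X,Y) onto ℋ = span{H α} equals −⟨X,Y⟩ · Σ_α ((n_α + 1)/r) · H α. -/
open scoped RealInnerProductSpace

/-!
Write `ℋ = span {H α}`. For `X, Y ⊥ ℋ`, total symmetry of `⟪σ ·, ·⟫` and (ii) give
`⟪σ(X, Y), H β⟫ = ⟪σ(X, H β), Y⟫ = L₁ ⟪X, Y⟫`, so the projection of `σ(X, Y)` onto `ℋ` is the
vector of `ℋ` whose inner product with every `H β` is `L₁ ⟪X, Y⟫`. Pairing the trace condition (iv)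
with `H β` and using (ii) once more yields `(n_β + 1) ‖H β‖² = -L₁ (dim E + ∑ n_α - n_β)`, and with
`dim E = s + dim W` this is exactly what makes `-⟪X, Y⟫ ∑ ((n_α + 1)/r) H α` have those inner products.
-/

namespace Submodule

variable {𝕜 E ι : Type*} [RCLike 𝕜] [NormedAddCommGroup E] [InnerProductSpace 𝕜 E]

theorem starProjection_span_range_eq {v : ι → E}
    [(span 𝕜 (Set.range v)).HasOrthogonalProjection] {x y : E} (hy : y ∈ span 𝕜 (Set.range v))
    (h : ∀ i, inner 𝕜 x (v i) = inner 𝕜 y (v i)) :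
    (span 𝕜 (Set.range v)).starProjection x = y := by
  refine eq_starProjection_of_mem_of_inner_eq_zero hy fun w hw => ?_
  have hker : span 𝕜 (Set.range v) ≤ LinearMap.ker (innerₛₗ 𝕜 (x - y)) := by
    rw [span_le]
    rintro _ ⟨i, rfl⟩
    simp [h i]
  simpa [inner_sub_left] using hker hw

end Submodule

section

variable {E ι : Type*} [NormedAddCommGroup E] [InnerProductSpace ℝ E] [Fintype ι]

theorem inner_sum_smul_of_pairwise_inner_eq {H : ι → E} {L : ℝ}
    (hHL : ∀ α β, α ≠ β → ⟪H α, H β⟫ = L) (c : ι → ℝ) (β : ι) :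
    ⟪∑ α, c α • H α, H β⟫ = c β * (‖H β‖ ^ 2 - L) + L * ∑ α, c α := by
  classical
  have hterm : ∀ α, ⟪c α • H α, H β⟫ =
      c α * L + if α = β then c β * (‖H β‖ ^ 2 - L) else 0 := by
    intro α
    rw [real_inner_smul_left]
    split_ifs with hαβ
    · subst hαβ
      rw [real_inner_self_eq_norm_sq]
      ring
    · rw [hHL α β hαβ]
      ring
  simp only [sum_inner, hterm, Finset.sum_add_distrib, Finset.sum_ite_eq', Finset.mem_univ,
    if_true, ← Finset.sum_mul]
  ring

variable {σ : E →ₗ[ℝ] E →ₗ[ℝ] E} {L : ℝ} {h : E}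

theorem inner_sigma_eq_of_inner_eq_zero (htri : ∀ X Y Z : E, ⟪σ X Y, Z⟫ = ⟪σ X Z, Y⟫)
    (hh : ∀ X, σ X h = ⟪X, h⟫ • h + L • X) {X : E} (hX : ⟪X, h⟫ = 0) (Y : E) :
    ⟪σ X Y, h⟫ = L * ⟪X, Y⟫ := by
  rw [htri, hh, hX, zero_smul, zero_add, real_inner_smul_left]

theorem inner_sum_sigma_self_eq (htri : ∀ X Y Z : E, ⟪σ X Y, Z⟫ = ⟪σ X Z, Y⟫)
    (hh : ∀ X, σ X h = ⟪X, h⟫ • h + L • X) (b : OrthonormalBasis ι ℝ E) :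
    ⟪∑ i, σ (b i) (b i), h⟫ = ‖h‖ ^ 2 + Fintype.card ι * L := by
  have hterm : ∀ i, ⟪σ (b i) (b i), h⟫ = ⟪h, b i⟫ * ⟪b i, h⟫ + L := by
    intro i
    rw [htri, hh, inner_add_left, real_inner_smul_left, real_inner_smul_left,
      real_inner_self_eq_norm_sq, b.orthonormal.1 i, real_inner_comm (b i) h]
    ring
  simp only [sum_inner, hterm, Finset.sum_add_distrib, b.sum_inner_mul_inner,
    real_inner_self_eq_norm_sq, Finset.sum_const, Finset.card_univ, nsmul_eq_mul]

theorem add_one_mul_norm_sq_eq {κ : Type*} [Fintype κ] {H : ι → E}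
    (hHL : ∀ α β, α ≠ β → ⟪H α, H β⟫ = L) (htri : ∀ X Y Z : E, ⟪σ X Y, Z⟫ = ⟪σ X Z, Y⟫)
    (hH : ∀ X α, σ X (H α) = ⟪X, H α⟫ • H α + L • X) (b : OrthonormalBasis κ ℝ E) (n : ι → ℝ)
    (htrace : ∑ i, σ (b i) (b i) = -∑ α, n α • H α) (β : ι) :
    (n β + 1) * ‖H β‖ ^ 2 = -L * (Fintype.card κ + ∑ α, n α - n β) := by
  have hpair := congrArg (⟪·, H β⟫) htrace
  simp only [inner_sum_sigma_self_eq htri (hH · β), inner_neg_left,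
    inner_sum_smul_of_pairwise_inner_eq hHL] at hpair
  linarith

theorem inner_sum_div_smul_eq_neg {H : ι → E} (hHL : ∀ α β, α ≠ β → ⟪H α, H β⟫ = L)
    (n : ι → ℝ) (d : ℕ)
    (hnorm : ∀ β, (n β + 1) * ‖H β‖ ^ 2 = -L * (Fintype.card ι + d + ∑ α, n α - n β)) (β : ι) :
    ⟪∑ α, ((n α + 1) / (d + 1)) • H α, H β⟫ = -L := by
  rw [inner_sum_smul_of_pairwise_inner_eq hHL, ← Finset.sum_div, Finset.sum_add_distrib]
  field_simp
  simp only [Finset.sum_const, Finset.card_univ, nsmul_eq_mul, mul_one]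
  linarith [hnorm β]

end

theorem proj_span_sigma_eq_general
    {E : Type*} [NormedAddCommGroup E] [InnerProductSpace ℝ E]
    [FiniteDimensional ℝ E]
    (s : ℕ) (L₁ : ℝ)
    (nn : Fin s → ℕ)
    (H : Fin s → E) (hind : LinearIndependent ℝ H)
    (hHL : ∀ α β, α ≠ β → ⟪H α, H β⟫ = L₁)
    (σ : E →ₗ[ℝ] E →ₗ[ℝ] E)
    (htri : ∀ X Y Z : E, ⟪σ X Y, Z⟫ = ⟪σ X Z, Y⟫)
    (hii : ∀ (X : E) (α : Fin s), σ X (H α) = ⟪X, H α⟫ • H α + L₁ • X)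
    (b : OrthonormalBasis (Fin (Module.finrank ℝ E)) ℝ E)
    (hiv : ∑ i, σ (b i) (b i) = -∑ α, (nn α : ℝ) • H α) :
    ∀ X Y : E, X ∈ (Submodule.span ℝ (Set.range H))ᗮ →
      Y ∈ (Submodule.span ℝ (Set.range H))ᗮ →
      (Submodule.orthogonalProjection (Submodule.span ℝ (Set.range H)) (σ X Y) : E) =
        (-⟪X, Y⟫) • ∑ α, (((nn α : ℝ) + 1) /
          ((Module.finrank ℝ ((Submodule.span ℝ (Set.range H))ᗮ) : ℝ) + 1)) • H α := by
  intro X Y hX _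
  set K := Submodule.span ℝ (Set.range H)
  have hHK : ∀ α, H α ∈ K := fun α => Submodule.subset_span ⟨α, rfl⟩
  have hdim : (Fintype.card (Fin (Module.finrank ℝ E)) : ℝ) =
      Fintype.card (Fin s) + Module.finrank ℝ Kᗮ := by
    rw [Fintype.card_fin, ← K.finrank_add_finrank_orthogonal, finrank_span_eq_card hind,
      Nat.cast_add]
  have hnorm := add_one_mul_norm_sq_eq hHL htri hii b (fun α => (nn α : ℝ)) hiv
  simp only [hdim] at hnorm
  rw [← Submodule.starProjection_apply]
  refine Submodule.starProjection_span_range_eq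
    (K.smul_mem _ (K.sum_mem fun α _ => K.smul_mem _ (hHK α))) fun β => ?_
  rw [inner_sigma_eq_of_inner_eq_zero htri (hii · β) (K.inner_left_of_mem_orthogonal (hHK β) hX),
    real_inner_smul_left, inner_sum_div_smul_eq_neg hHL _ _ hnorm]
  ring

/-- Under Naitoh's structure equations, for `X, Y` in the orthogonal complement
`W = ℋ^⊥` of `ℋ = span{H α}`, the orthogonal projection of `σ(X, Y)` onto `ℋ`
equals `-⟪X, Y⟫ • ∑_α ((n_α + 1)/r) • H α`, where `r = dim W + 1`. -/
theorem proj_span_sigma_eq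
    {E : Type*} [NormedAddCommGroup E] [InnerProductSpace ℝ E]
    [FiniteDimensional ℝ E]
    (s : ℕ) (hs : 1 ≤ s) (L₁ : ℝ) (hL : L₁ < 0)
    (nn : Fin s → ℕ) (hnn : ∀ α, 0 < nn α)
    (H : Fin s → E) (hind : LinearIndependent ℝ H)
    (hHL : ∀ α β, α ≠ β → ⟪H α, H β⟫ = L₁)
    (σ : E →ₗ[ℝ] E →ₗ[ℝ] E)
    (hsymm : ∀ X Y : E, σ X Y = σ Y X)
    (htri : ∀ X Y Z : E, ⟪σ X Y, Z⟫ = ⟪σ X Z, Y⟫)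
    (hii : ∀ (X : E) (α : Fin s), σ X (H α) = ⟪X, H α⟫ • H α + L₁ • X)
    (b : OrthonormalBasis (Fin (Module.finrank ℝ E)) ℝ E)
    (hiv : ∑ i, σ (b i) (b i) = -∑ α, (nn α : ℝ) • H α)
    (hW : 1 ≤ Module.finrank ℝ ((Submodule.span ℝ (Set.range H))ᗮ)) :
    ∀ X Y : E, X ∈ (Submodule.span ℝ (Set.range H))ᗮ →
      Y ∈ (Submodule.span ℝ (Set.range H))ᗮ →
      (Submodule.orthogonalProjection (Submodule.span ℝ (Set.range H)) (σ X Y) : E) =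
        (-⟪X, Y⟫) • ∑ α, (((nn α : ℝ) + 1) /
          ((Module.finrank ℝ ((Submodule.span ℝ (Set.range H))ᗮ) : ℝ) + 1)) • H α :=
  proj_span_sigma_eq_general s L₁ nn H hind hHL σ htri hii b hiv
end

section
/- With the notation and hypotheses (i)–(iv) of the context, assume dim W ≥ 1, and define σ_W : W × W → W by σ_W(X,Y) := P_W(σ(X,Y)), where P_W is the orthogonal projection of E onto W. Then: (a) for any orthonormal basis (f_j) of W, Σ_j σ_W(f_j, f_j) = 0; and (b) for all X, Y, Z ∈ W, σ_W(X, σ_W(Y,Z)) − σ_W(Y, σ_W(X,Z)) = ((n+1)·L₁/r) · (⟨Y,Z⟩·X − ⟨X,Z⟩·Y). -/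
/-!
On `W = ℋ^⊥` every `σ_X` sends `ℋ` into `W` (by (ii), `σ_X (H α) = L₁ X`), so for `Y, Z ∈ W` the
`ℋ`-component of `σ(Y, Z)` is forced by `⟪σ(Y, Z), H β⟫ = L₁ ⟪Y, Z⟫`: it equals `L₁ ⟪Y, Z⟫ u`, where
`u ∈ ℋ` is the vector with `⟪u, H β⟫ = 1` for all `β`. Then `σ_X u = c X` and the Gauss equation
(iii) projects to the Gauss equation of `σ_W` with constant `L₁ (1 - c)`; the trace condition (iv)
computes `‖H β‖²`, hence `u` and `c`, giving `L₁ (1 - c) = (n + 1) L₁ / r`. Trace-freeness holds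
because `P_W ∘ σ_w` on `W` has the same trace as `σ_w` on `E` (the `ℋ`-block of `σ_w` vanishes),
and `tr σ_w = ⟪∑ σ(e_i, e_i), w⟫ = 0`.
-/

open scoped RealInnerProductSpace

section

open Module Submodule

variable {E : Type*} [NormedAddCommGroup E] [InnerProductSpace ℝ E]

theorem LinearMap.trace_eq_trace_compress_add_trace_compress_orthogonal [FiniteDimensional ℝ E]
    (W : Submodule ℝ E) (T : E →ₗ[ℝ] E) :
    trace ℝ E T =
      trace ℝ W (W.orthogonalProjectionOnto.toLinearMap ∘ₗ T ∘ₗ W.subtype) +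
      trace ℝ Wᗮ (Wᗮ.orthogonalProjectionOnto.toLinearMap ∘ₗ T ∘ₗ Wᗮ.subtype) := by
  rw [trace_comp_comm', trace_comp_comm' _ Wᗮ.orthogonalProjectionOnto.toLinearMap, ← map_add]
  congr 1
  ext x
  simp

theorem LinearMap.trace_compress_eq_trace_of_mapsTo_orthogonal [FiniteDimensional ℝ E]
    (W : Submodule ℝ E) (T : E →ₗ[ℝ] E) (hT : ∀ x ∈ Wᗮ, T x ∈ W) :
    trace ℝ W (W.orthogonalProjectionOnto.toLinearMap ∘ₗ T ∘ₗ W.subtype) = trace ℝ E T := by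
  have hzero : Wᗮ.orthogonalProjectionOnto.toLinearMap ∘ₗ T ∘ₗ Wᗮ.subtype = 0 := by
    ext x
    rw [comp_apply, comp_apply, subtype_apply, ContinuousLinearMap.coe_coe,
      orthogonalProjectionOnto_apply_of_mem_orthogonal (le_orthogonal_orthogonal W (hT x x.2))]
    rfl
  rw [trace_eq_trace_compress_add_trace_compress_orthogonal W, hzero, map_zero, add_zero]

theorem mem_orthogonal_span_range_iff {ι : Type*} (H : ι → E) (v : E) :
    v ∈ (span ℝ (Set.range H))ᗮ ↔ ∀ α, ⟪H α, v⟫ = 0 := by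
  have : v ∈ (span ℝ (Set.range H))ᗮ ↔ span ℝ (Set.range H) ≤ (ℝ ∙ v)ᗮ := by
    rw [mem_orthogonal', SetLike.le_def]
    simp only [mem_orthogonal_singleton_iff_inner_right]
  rw [this, span_le, Set.range_subset_iff]
  simp only [SetLike.mem_coe, mem_orthogonal_singleton_iff_inner_left]

theorem starProjection_orthogonal_span_eq_sub_smul [FiniteDimensional ℝ E] {ι : Type*}
    {H : ι → E} {u v : E} {t : ℝ} (hu : u ∈ span ℝ (Set.range H)) (hu1 : ∀ β, ⟪u, H β⟫ = 1)
    (hv : ∀ β, ⟪v, H β⟫ = t) :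
    (span ℝ (Set.range H))ᗮ.starProjection v = v - t • u := by
  refine eq_starProjection_of_mem_orthogonal ?_ ?_
  · refine (mem_orthogonal_span_range_iff H _).mpr fun β => ?_
    rw [real_inner_comm, inner_sub_left, real_inner_smul_left, hv, hu1, mul_one, sub_self]
  · rw [sub_sub_cancel]
    exact le_orthogonal_orthogonal _ (smul_mem _ t hu)

theorem inner_sum_smul_eq_of_inner_eq_const {ι : Type*} [Fintype ι] {H : ι → E} {L₁ : ℝ}
    (hHL : ∀ α β, α ≠ β → ⟪H α, H β⟫ = L₁) (a : ι → ℝ) (β : ι) :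
    ⟪∑ α, a α • H α, H β⟫ = L₁ * ∑ α, a α + a β * (⟪H β, H β⟫ - L₁) := by
  have hoff : ∑ α, a α * (⟪H α, H β⟫ - L₁) = a β * (⟪H β, H β⟫ - L₁) :=
    Finset.sum_eq_single_of_mem β (Finset.mem_univ β) fun α _ hαβ => by
      rw [hHL α β hαβ, sub_self, mul_zero]
  calc ⟪∑ α, a α • H α, H β⟫ = ∑ α, (L₁ * a α + a α * (⟪H α, H β⟫ - L₁)) := by
        simp only [sum_inner, real_inner_smul_left]
        exact Finset.sum_congr rfl fun _ _ => by ring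
    _ = _ := by rw [Finset.sum_add_distrib, ← Finset.mul_sum, hoff]

theorem finrank_orthogonal_span_add_card [FiniteDimensional ℝ E] {ι : Type*} [Fintype ι]
    {H : ι → E} (hind : LinearIndependent ℝ H) :
    finrank ℝ (span ℝ (Set.range H))ᗮ + Fintype.card ι = finrank ℝ E := by
  rw [← finrank_span_eq_card hind, add_comm, finrank_add_finrank_orthogonal]

section SecondFundamentalForm

variable {ι : Type*} {L₁ : ℝ} {H : ι → E} {σ : E →ₗ[ℝ] E →ₗ[ℝ] E}

theorem sigma_H_of_mem_orthogonal
    (hii : ∀ (X : E) (α : ι), σ X (H α) = ⟪X, H α⟫ • H α + L₁ • X)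
    {X : E} (hX : X ∈ (span ℝ (Set.range H))ᗮ) (α : ι) : σ X (H α) = L₁ • X := by
  rw [hii, real_inner_comm, (mem_orthogonal_span_range_iff H X).mp hX, zero_smul, zero_add]

theorem sigma_sum_smul_of_mem_orthogonal [Fintype ι]
    (hii : ∀ (X : E) (α : ι), σ X (H α) = ⟪X, H α⟫ • H α + L₁ • X)
    {X : E} (hX : X ∈ (span ℝ (Set.range H))ᗮ) (a : ι → ℝ) :
    σ X (∑ α, a α • H α) = (L₁ * ∑ α, a α) • X := by
  simp only [map_sum, map_smul, sigma_H_of_mem_orthogonal hii hX, smul_smul]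
  rw [← Finset.sum_smul, ← Finset.sum_mul, mul_comm]

theorem sigma_mem_orthogonal_of_mem_span [Finite ι]
    (hii : ∀ (X : E) (α : ι), σ X (H α) = ⟪X, H α⟫ • H α + L₁ • X)
    {X h : E} (hX : X ∈ (span ℝ (Set.range H))ᗮ) (hh : h ∈ span ℝ (Set.range H)) :
    σ X h ∈ (span ℝ (Set.range H))ᗮ := by
  have := Fintype.ofFinite ι
  obtain ⟨a, rfl⟩ := (mem_span_range_iff_exists_fun ℝ).mp hh
  rw [sigma_sum_smul_of_mem_orthogonal hii hX]
  exact smul_mem _ _ hX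

theorem inner_sigma_H_of_mem_orthogonal (htri : ∀ X Y Z : E, ⟪σ X Y, Z⟫ = ⟪σ X Z, Y⟫)
    (hii : ∀ (X : E) (α : ι), σ X (H α) = ⟪X, H α⟫ • H α + L₁ • X)
    {Y : E} (hY : Y ∈ (span ℝ (Set.range H))ᗮ) (Z : E) (β : ι) :
    ⟪σ Y Z, H β⟫ = L₁ * ⟪Y, Z⟫ := by
  rw [htri, sigma_H_of_mem_orthogonal hii hY, real_inner_smul_left]

theorem inner_sum_sigma_basis_H (htri : ∀ X Y Z : E, ⟪σ X Y, Z⟫ = ⟪σ X Z, Y⟫)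
    (hii : ∀ (X : E) (α : ι), σ X (H α) = ⟪X, H α⟫ • H α + L₁ • X)
    {κ : Type*} [Fintype κ] (b : OrthonormalBasis κ ℝ E) (β : ι) :
    ⟪∑ i, σ (b i) (b i), H β⟫ = ⟪H β, H β⟫ + finrank ℝ E * L₁ := by
  have hterm : ∀ i, ⟪σ (b i) (b i), H β⟫ = ⟪H β, b i⟫ * ⟪b i, H β⟫ + L₁ := fun i => by
    rw [htri, hii, inner_add_left, real_inner_smul_left, real_inner_smul_left, b.inner_eq_one,
      mul_one, real_inner_comm (b i) (H β)]
  simp only [sum_inner, hterm, Finset.sum_add_distrib, b.sum_inner_mul_inner, Finset.sum_const,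
    Finset.card_univ, ← finrank_eq_card_basis b.toBasis, nsmul_eq_mul]

theorem succ_mul_inner_self_sub_eq [Fintype ι] (hHL : ∀ α β, α ≠ β → ⟪H α, H β⟫ = L₁)
    (htri : ∀ X Y Z : E, ⟪σ X Y, Z⟫ = ⟪σ X Z, Y⟫)
    (hii : ∀ (X : E) (α : ι), σ X (H α) = ⟪X, H α⟫ • H α + L₁ • X)
    {κ : Type*} [Fintype κ] (b : OrthonormalBasis κ ℝ E) (nn : ι → ℕ)
    (hiv : ∑ i, σ (b i) (b i) = -∑ α, (nn α : ℝ) • H α) (β : ι) :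
    ((nn β : ℝ) + 1) * (⟪H β, H β⟫ - L₁) = -((((finrank ℝ E + ∑ α, nn α : ℕ) : ℝ) + 1) * L₁) := by
  have h := inner_sum_sigma_basis_H htri hii b β
  rw [hiv, inner_neg_left, inner_sum_smul_eq_of_inner_eq_const hHL] at h
  push_cast
  linear_combination -h

theorem exists_sum_smul_inner_eq_one [FiniteDimensional ℝ E] [Fintype ι] (hL : L₁ ≠ 0)
    (hind : LinearIndependent ℝ H) (hHL : ∀ α β, α ≠ β → ⟪H α, H β⟫ = L₁)
    (htri : ∀ X Y Z : E, ⟪σ X Y, Z⟫ = ⟪σ X Z, Y⟫)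
    (hii : ∀ (X : E) (α : ι), σ X (H α) = ⟪X, H α⟫ • H α + L₁ • X)
    {κ : Type*} [Fintype κ] (b : OrthonormalBasis κ ℝ E) (nn : ι → ℕ)
    (hiv : ∑ i, σ (b i) (b i) = -∑ α, (nn α : ℝ) • H α) :
    ∃ a : ι → ℝ, (∀ β, ⟪∑ α, a α • H α, H β⟫ = 1) ∧
      L₁ * (1 - L₁ * ∑ α, a α) = (((finrank ℝ E + ∑ α, nn α : ℕ) : ℝ) + 1) * L₁ /
        ((finrank ℝ (span ℝ (Set.range H))ᗮ : ℝ) + 1) := by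
  set r : ℝ := (finrank ℝ (span ℝ (Set.range H))ᗮ : ℝ) + 1
  have hr : r ≠ 0 := by positivity
  have hrank : r + Fintype.card ι = finrank ℝ E + 1 := by
    rw [← finrank_orthogonal_span_add_card hind]
    push_cast
    ring
  have hsum : L₁ * ∑ α, -((nn α : ℝ) + 1) / (L₁ * r) =
      -((∑ α, (nn α : ℝ)) + Fintype.card ι) / r := by
    calc L₁ * ∑ α, -((nn α : ℝ) + 1) / (L₁ * r) = ∑ α, -((nn α : ℝ) + 1) / r := by
          rw [Finset.mul_sum]
          exact Finset.sum_congr rfl fun α _ => by field_simp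
      _ = _ := by
          rw [← Finset.sum_div, Finset.sum_neg_distrib, Finset.sum_add_distrib]
          simp
  -- `succ_mul_inner_self_sub_eq` makes `a β * (⟪H β, H β⟫ - L₁) = (n + 1) / r` independent of `β`.
  refine ⟨fun α => -((nn α : ℝ) + 1) / (L₁ * r), fun β => ?_, ?_⟩
  · rw [inner_sum_smul_eq_of_inner_eq_const hHL, hsum, div_mul_eq_mul_div, neg_mul,
      succ_mul_inner_self_sub_eq hHL htri hii b nn hiv β]
    push_cast
    field_simp
    linear_combination -hrank
  · rw [hsum]
    push_cast
    field_simp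
    linear_combination hrank

theorem inner_sigma_self_eq (hsymm : ∀ X Y : E, σ X Y = σ Y X)
    (htri : ∀ X Y Z : E, ⟪σ X Y, Z⟫ = ⟪σ X Z, Y⟫) (x w : E) : ⟪σ x x, w⟫ = ⟪x, σ w x⟫ := by
  rw [htri, hsymm, real_inner_comm]

theorem inner_sum_sigma_self_eq_trace (hsymm : ∀ X Y : E, σ X Y = σ Y X)
    (htri : ∀ X Y Z : E, ⟪σ X Y, Z⟫ = ⟪σ X Z, Y⟫) {κ : Type*} [Fintype κ]
    (b : OrthonormalBasis κ ℝ E) (w : E) :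
    ⟪∑ i, σ (b i) (b i), w⟫ = LinearMap.trace ℝ E (σ w) := by
  rw [LinearMap.trace_eq_sum_inner _ b, sum_inner]
  simp only [inner_sigma_self_eq hsymm htri]

theorem inner_sum_orthogonalProjectionOnto_sigma_self_eq_trace
    (hsymm : ∀ X Y : E, σ X Y = σ Y X) (htri : ∀ X Y Z : E, ⟪σ X Y, Z⟫ = ⟪σ X Z, Y⟫)
    (W : Submodule ℝ E) [W.HasOrthogonalProjection] {κ : Type*} [Fintype κ]
    (f : OrthonormalBasis κ ℝ W) (w : W) :
    ⟪∑ j, W.orthogonalProjectionOnto (σ (f j) (f j)), w⟫ =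
      LinearMap.trace ℝ W (W.orthogonalProjectionOnto.toLinearMap ∘ₗ σ w ∘ₗ W.subtype) := by
  rw [LinearMap.trace_eq_sum_inner _ f, sum_inner]
  refine Finset.sum_congr rfl fun j _ => ?_
  rw [inner_orthogonalProjectionOnto_eq_of_mem_right, LinearMap.comp_apply, LinearMap.comp_apply,
    ContinuousLinearMap.coe_coe, inner_orthogonalProjectionOnto_eq_of_mem_left, subtype_apply,
    inner_sigma_self_eq hsymm htri]

theorem sum_orthogonalProjectionOnto_sigma_self_eq_zero [FiniteDimensional ℝ E] [Fintype ι]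
    (hsymm : ∀ X Y : E, σ X Y = σ Y X) (htri : ∀ X Y Z : E, ⟪σ X Y, Z⟫ = ⟪σ X Z, Y⟫)
    (hii : ∀ (X : E) (α : ι), σ X (H α) = ⟪X, H α⟫ • H α + L₁ • X)
    {κ : Type*} [Fintype κ] (b : OrthonormalBasis κ ℝ E) (nn : ι → ℕ)
    (hiv : ∑ i, σ (b i) (b i) = -∑ α, (nn α : ℝ) • H α)
    {κ' : Type*} [Fintype κ'] (f : OrthonormalBasis κ' ℝ (span ℝ (Set.range H))ᗮ) :
    ∑ j, (span ℝ (Set.range H))ᗮ.orthogonalProjectionOnto (σ (f j) (f j)) = 0 := by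
  refine ext_inner_right ℝ fun w => ?_
  have hmaps : ∀ x ∈ (span ℝ (Set.range H))ᗮᗮ, σ w x ∈ (span ℝ (Set.range H))ᗮ :=
    fun x hx => sigma_mem_orthogonal_of_mem_span hii w.2 (by rwa [orthogonal_orthogonal] at hx)
  rw [inner_sum_orthogonalProjectionOnto_sigma_self_eq_trace hsymm htri,
    LinearMap.trace_compress_eq_trace_of_mapsTo_orthogonal _ _ hmaps,
    ← inner_sum_sigma_self_eq_trace hsymm htri b, hiv, inner_neg_left, sum_inner, inner_zero_left]
  simp [real_inner_smul_left, (mem_orthogonal_span_range_iff H w).mp w.2]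

theorem orthogonalProjectionOnto_sigma_gauss [FiniteDimensional ℝ E]
    (htri : ∀ X Y Z : E, ⟪σ X Y, Z⟫ = ⟪σ X Z, Y⟫)
    (hii : ∀ (X : E) (α : ι), σ X (H α) = ⟪X, H α⟫ • H α + L₁ • X)
    (hiii : ∀ X Y Z : E, σ X (σ Y Z) - σ Y (σ X Z) = L₁ • (⟪Y, Z⟫ • X - ⟪X, Z⟫ • Y))
    {u : E} {c : ℝ} (hu : u ∈ span ℝ (Set.range H)) (hu1 : ∀ β, ⟪u, H β⟫ = 1)
    (hσu : ∀ X ∈ (span ℝ (Set.range H))ᗮ, σ X u = c • X)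
    {X Y Z : E} (hX : X ∈ (span ℝ (Set.range H))ᗮ) (hY : Y ∈ (span ℝ (Set.range H))ᗮ) :
    ((span ℝ (Set.range H))ᗮ.orthogonalProjectionOnto
        (σ X ((span ℝ (Set.range H))ᗮ.orthogonalProjectionOnto (σ Y Z))) : E) -
      (span ℝ (Set.range H))ᗮ.orthogonalProjectionOnto
        (σ Y ((span ℝ (Set.range H))ᗮ.orthogonalProjectionOnto (σ X Z))) =
      (L₁ * (1 - c)) • (⟪Y, Z⟫ • X - ⟪X, Z⟫ • Y) := by
  set W := (span ℝ (Set.range H))ᗮ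
  have hcompose : ∀ A ∈ W, ∀ B ∈ W, (W.orthogonalProjectionOnto
      (σ A (W.orthogonalProjectionOnto (σ B Z))) : E) =
        W.starProjection (σ A (σ B Z)) - (L₁ * ⟪B, Z⟫ * c) • A := fun A hA B hB => by
    rw [coe_orthogonalProjectionOnto_apply, coe_orthogonalProjectionOnto_apply,
      starProjection_orthogonal_span_eq_sub_smul hu hu1
        (inner_sigma_H_of_mem_orthogonal htri hii hB Z),
      map_sub, map_smul, hσu A hA, smul_smul, map_sub, map_smul, starProjection_eq_self_iff.mpr hA]
  have hflat : W.starProjection (σ X (σ Y Z)) - W.starProjection (σ Y (σ X Z)) =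
      L₁ • (⟪Y, Z⟫ • X - ⟪X, Z⟫ • Y) := by
    rw [← map_sub, hiii, starProjection_eq_self_iff]
    exact smul_mem _ _ (sub_mem (smul_mem _ _ hX) (smul_mem _ _ hY))
  rw [hcompose X hX Y hY, hcompose Y hY X hX]
  linear_combination (norm := module) hflat

end SecondFundamentalForm

end

theorem sigma_W_tracefree_and_gauss_general
    {E : Type*} [NormedAddCommGroup E] [InnerProductSpace ℝ E]
    [FiniteDimensional ℝ E]
    (s : ℕ) (L₁ : ℝ) (hL : L₁ < 0)
    (nn : Fin s → ℕ)
    (H : Fin s → E) (hind : LinearIndependent ℝ H)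
    (hHL : ∀ α β, α ≠ β → ⟪H α, H β⟫ = L₁)
    (σ : E →ₗ[ℝ] E →ₗ[ℝ] E)
    (hsymm : ∀ X Y : E, σ X Y = σ Y X)
    (htri : ∀ X Y Z : E, ⟪σ X Y, Z⟫ = ⟪σ X Z, Y⟫)
    (hii : ∀ (X : E) (α : Fin s), σ X (H α) = ⟪X, H α⟫ • H α + L₁ • X)
    (hiii : ∀ X Y Z : E, σ X (σ Y Z) - σ Y (σ X Z) =
      L₁ • (⟪Y, Z⟫ • X - ⟪X, Z⟫ • Y))
    (b : OrthonormalBasis (Fin (Module.finrank ℝ E)) ℝ E)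
    (hiv : ∑ i, σ (b i) (b i) = -∑ α, (nn α : ℝ) • H α) :
    (∀ (ι : Type) (_ : Fintype ι)
        (f : OrthonormalBasis ι ℝ ((Submodule.span ℝ (Set.range H))ᗮ)),
      ∑ j, Submodule.orthogonalProjection ((Submodule.span ℝ (Set.range H))ᗮ)
          (σ (f j : E) (f j : E)) = 0) ∧
    (∀ X Y Z : E, X ∈ (Submodule.span ℝ (Set.range H))ᗮ →
      Y ∈ (Submodule.span ℝ (Set.range H))ᗮ →
      Z ∈ (Submodule.span ℝ (Set.range H))ᗮ →
      (Submodule.orthogonalProjection ((Submodule.span ℝ (Set.range H))ᗮ)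
          (σ X ((Submodule.orthogonalProjection ((Submodule.span ℝ (Set.range H))ᗮ)
            (σ Y Z) : E))) : E) -
      (Submodule.orthogonalProjection ((Submodule.span ℝ (Set.range H))ᗮ)
          (σ Y ((Submodule.orthogonalProjection ((Submodule.span ℝ (Set.range H))ᗮ)
            (σ X Z) : E))) : E) =
        ((((Module.finrank ℝ E + ∑ α, nn α : ℕ) : ℝ) + 1) * L₁ /
            ((Module.finrank ℝ ((Submodule.span ℝ (Set.range H))ᗮ) : ℝ) + 1)) •
          (⟪Y, Z⟫ • X - ⟪X, Z⟫ • Y)) := by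
  obtain ⟨a, ha, hconst⟩ := exists_sum_smul_inner_eq_one hL.ne hind hHL htri hii b nn hiv
  refine ⟨fun _ _ f => sum_orthogonalProjectionOnto_sigma_self_eq_zero hsymm htri hii b nn hiv f,
    fun X Y Z hX hY _ => ?_⟩
  rw [← hconst]
  exact orthogonalProjectionOnto_sigma_gauss htri hii hiii
    ((Submodule.mem_span_range_iff_exists_fun ℝ).mpr ⟨a, rfl⟩) ha
    (fun X hX => sigma_sum_smul_of_mem_orthogonal hii hX a) hX hY

/-- Lemma 3.2 of the paper: the block `σ_W(X,Y) := P_W(σ(X,Y))` of the second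
fundamental form on `W = ℋ^⊥` is trace-free and satisfies the flat Gauss
equation with constant `(n+1)·L₁/r`. -/
theorem sigma_W_tracefree_and_gauss
    {E : Type*} [NormedAddCommGroup E] [InnerProductSpace ℝ E]
    [FiniteDimensional ℝ E]
    (s : ℕ) (hs : 1 ≤ s) (L₁ : ℝ) (hL : L₁ < 0)
    (nn : Fin s → ℕ) (hnn : ∀ α, 0 < nn α)
    (H : Fin s → E) (hind : LinearIndependent ℝ H)
    (hHL : ∀ α β, α ≠ β → ⟪H α, H β⟫ = L₁)
    (σ : E →ₗ[ℝ] E →ₗ[ℝ] E)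
    (hsymm : ∀ X Y : E, σ X Y = σ Y X)
    (htri : ∀ X Y Z : E, ⟪σ X Y, Z⟫ = ⟪σ X Z, Y⟫)
    (hii : ∀ (X : E) (α : Fin s), σ X (H α) = ⟪X, H α⟫ • H α + L₁ • X)
    (hiii : ∀ X Y Z : E, σ X (σ Y Z) - σ Y (σ X Z) =
      L₁ • (⟪Y, Z⟫ • X - ⟪X, Z⟫ • Y))
    (b : OrthonormalBasis (Fin (Module.finrank ℝ E)) ℝ E)
    (hiv : ∑ i, σ (b i) (b i) = -∑ α, (nn α : ℝ) • H α)
    (hW : 1 ≤ Module.finrank ℝ ((Submodule.span ℝ (Set.range H))ᗮ)) :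
    (∀ (ι : Type) (_ : Fintype ι)
        (f : OrthonormalBasis ι ℝ ((Submodule.span ℝ (Set.range H))ᗮ)),
      ∑ j, Submodule.orthogonalProjection ((Submodule.span ℝ (Set.range H))ᗮ)
          (σ (f j : E) (f j : E)) = 0) ∧
    (∀ X Y Z : E, X ∈ (Submodule.span ℝ (Set.range H))ᗮ →
      Y ∈ (Submodule.span ℝ (Set.range H))ᗮ →
      Z ∈ (Submodule.span ℝ (Set.range H))ᗮ →
      (Submodule.orthogonalProjection ((Submodule.span ℝ (Set.range H))ᗮ)
          (σ X ((Submodule.orthogonalProjection ((Submodule.span ℝ (Set.range H))ᗮ)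
            (σ Y Z) : E))) : E) -
      (Submodule.orthogonalProjection ((Submodule.span ℝ (Set.range H))ᗮ)
          (σ Y ((Submodule.orthogonalProjection ((Submodule.span ℝ (Set.range H))ᗮ)
            (σ X Z) : E))) : E) =
        ((((Module.finrank ℝ E + ∑ α, nn α : ℕ) : ℝ) + 1) * L₁ /
            ((Module.finrank ℝ ((Submodule.span ℝ (Set.range H))ᗮ) : ℝ) + 1)) •
          (⟪Y, Z⟫ • X - ⟪X, Z⟫ • Y)) :=
  sigma_W_tracefree_and_gauss_general s L₁ hL nn H hind hHL σ hsymm htri hii hiii b hiv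
end

section
/- Let E be a finite-dimensional real inner product space, s ≥ 1 an integer, and L₁ < 0 a real number. Let H : Fin s → E satisfy ⟨H α, H β⟩ = L₁ for all α ≠ β, and let σ : E × E → E be a symmetric bilinear map such that the trilinear form (X,Y,Z) ↦ ⟨σ(X,Y), Z⟩ is totally symmetric and σ(X, H α) = ⟨X, H α⟩·H α + L₁·X for all X ∈ E and all α. If span{H α : α ∈ Fin s} ≠ E, then the family H is linearly independent; in particular dim span{H α} = s. -/
open scoped RealInnerProductSpace

/-- Second assertion of Lemma 3.1: if the span of the mean curvature vectors
`H α` is a proper subspace of `E`, then the `H α` are linearly independent,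
so their span has dimension exactly `s`. -/
theorem linearIndependent_of_span_ne_top
    {E : Type*} [NormedAddCommGroup E] [InnerProductSpace ℝ E]
    [FiniteDimensional ℝ E]
    (s : ℕ) (hs : 1 ≤ s) (L₁ : ℝ) (hL : L₁ < 0)
    (H : Fin s → E)
    (hHL : ∀ α β, α ≠ β → ⟪H α, H β⟫ = L₁)
    (σ : E →ₗ[ℝ] E →ₗ[ℝ] E)
    (hsymm : ∀ X Y : E, σ X Y = σ Y X)
    (htri : ∀ X Y Z : E, ⟪σ X Y, Z⟫ = ⟪σ X Z, Y⟫)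
    (hii : ∀ (X : E) (α : Fin s), σ X (H α) = ⟪X, H α⟫ • H α + L₁ • X)
    (hspan : Submodule.span ℝ (Set.range H) ≠ ⊤) :
    LinearIndependent ℝ H ∧
      Module.finrank ℝ (Submodule.span ℝ (Set.range H)) = s := by
  -- obtain a nonzero vector orthogonal to all H α
  have horth : (Submodule.span ℝ (Set.range H))ᗮ ≠ ⊥ := by
    intro h
    exact hspan (by
      have := Submodule.orthogonal_eq_bot_iff (K := Submodule.span ℝ (Set.range H))
      exact this.mp h)
  obtain ⟨e, he, hne⟩ := Submodule.exists_mem_ne_zero_of_ne_bot horth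
  have heH : ∀ α, ⟪e, H α⟫ = 0 := by
    intro α
    have : H α ∈ Submodule.span ℝ (Set.range H) :=
      Submodule.subset_span ⟨α, rfl⟩
    have := (Submodule.mem_orthogonal _ e).mp he (H α) this
    rw [real_inner_comm]; exact this
  have hee : (0:ℝ) < ⟪e, e⟫ := by
    rw [real_inner_self_eq_norm_sq]
    exact pow_pos (norm_pos_iff.mpr hne) 2
  -- key: ⟪σ e e, H α⟫ = L₁ ⟪e,e⟫
  have hkey : ∀ α, ⟪σ e e, H α⟫ = L₁ * ⟪e, e⟫ := by
    intro α
    rw [htri e e (H α), hii e α]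
    rw [inner_add_left, real_inner_smul_left, real_inner_smul_left, heH α]
    ring
  have hli : LinearIndependent ℝ H := by
    rw [Fintype.linearIndependent_iff]
    intro c hc β
    have hsum : ∑ α, c α = 0 := by
      have h1 : ⟪σ e e, ∑ α, c α • H α⟫ = 0 := by rw [hc, inner_zero_right]
      rw [inner_sum] at h1
      simp only [real_inner_smul_right, hkey] at h1
      have : (∑ α, c α) * (L₁ * ⟪e, e⟫) = 0 := by
        rw [← h1]; rw [Finset.sum_mul]
      rcases mul_eq_zero.mp this with h | h
      · exact h
      · exact absurd h (mul_neg_of_neg_of_pos hL hee).ne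
    have h2 : ⟪H β, ∑ α, c α • H α⟫ = 0 := by rw [hc, inner_zero_right]
    rw [inner_sum] at h2
    simp only [real_inner_smul_right] at h2
    have h3 : ∑ α, c α * ⟪H β, H α⟫
        = c β * ⟪H β, H β⟫ + ∑ α ∈ Finset.univ.erase β, c α * L₁ := by
      rw [← Finset.add_sum_erase _ _ (Finset.mem_univ β)]
      congr 1
      apply Finset.sum_congr rfl
      intro α hα
      rw [hHL β α (Finset.ne_of_mem_erase hα).symm]
    have h4 : ∑ α ∈ Finset.univ.erase β, c α * L₁
        = (∑ α ∈ Finset.univ.erase β, c α) * L₁ := by rw [Finset.sum_mul]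
    have h5 : ∑ α ∈ Finset.univ.erase β, c α = - c β := by
      have := Finset.add_sum_erase Finset.univ c (Finset.mem_univ β)
      rw [hsum] at this
      linarith
    rw [h3, h4, h5] at h2
    have h6 : c β * (⟪H β, H β⟫ - L₁) = 0 := by linarith
    have h7 : ⟪H β, H β⟫ - L₁ > 0 := by
      have := real_inner_self_nonneg (x := H β)
      linarith
    rcases mul_eq_zero.mp h6 with h | h
    · exact h
    · linarith
  refine ⟨hli, ?_⟩
  simpa using finrank_span_eq_card hli
end

section
/- For every integer n₀ ≥ 2 and every real c > 0, with A and g^λ as in the context, one has (1/(n₀(n₀ − 1))) · Σ_{λ,μ,ν = 1}^{n₀} g^λ · g^μ · g^ν · A(λ,μ,ν)² = 1/((n₀ + 1)·c). -/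
/-!
Both `g^λ` and `A` are homogeneous in `c` (of degrees `-1` and `1`), so every summand is `c⁻¹`
times its value at `c = 1`. Only index triples whose two smallest entries agree contribute: each
ordering of `(a, a, d)` with `a < d` gives `1/(d(d+1))`, and `(d, d, d)` gives `(d-1)²/(d(d+1))`.
Hence enlarging the index range from `{1,…,n}` to `{1,…,n+1}` adds
`(3n + n²)/((n+1)(n+2))`, which is exactly the increment of `n(n-1)/(n+1)`.
-/

/-- The Fubini–Pick form of the flat hyperbolic affine hypersphere
`x¹ ⋯ x^{n₀+1} = C₀` (Example 2.1 of the paper): if `(a, b, d)` is the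
nondecreasing rearrangement of the indices `(x, y, z)`, then the value is
`-((a² - 1)/a²)·c` when `a = b = d`, `((a + 1)/(a·d))·c` when `a = b < d`,
and `0` when `a < b`. -/
noncomputable def fubiniPickFlat (c : ℝ) (x y z : ℕ) : ℝ :=
  let a := min x (min y z)
  let dd := max x (max y z)
  let b := x + y + z - a - dd
  if a = b then
    (if b = dd then -(((a : ℝ) ^ 2 - 1) / (a : ℝ) ^ 2) * c
     else (((a : ℝ) + 1) / ((a : ℝ) * (dd : ℝ))) * c)
  else 0

/-- The inverse Berwald–Blaschke metric coefficients `g^λ = λ/((λ+1)·c)` of the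
flat hyperbolic affine hypersphere. -/
noncomputable def invMetricFlat (c : ℝ) (l : ℕ) : ℝ := (l : ℝ) / (((l : ℝ) + 1) * c)

open Finset

theorem sum_range_succ_cube_of_symmetric {M : Type*} [AddCommMonoid M] (f : ℕ → ℕ → ℕ → M)
    (h₁₂ : ∀ x y z, f x y z = f y x z) (h₂₃ : ∀ x y z, f x y z = f x z y) (n : ℕ) :
    ∑ l ∈ range (n + 1), ∑ m ∈ range (n + 1), ∑ v ∈ range (n + 1), f l m v =
      ∑ l ∈ range n, ∑ m ∈ range n, ∑ v ∈ range n, f l m v +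
        3 • ∑ l ∈ range n, ∑ m ∈ range n, f l m n + 3 • ∑ l ∈ range n, f l n n + f n n n := by
  have h₁ : ∀ x y, f n x y = f x y n := fun x y => by rw [h₁₂, h₂₃]
  have h₂ : ∀ x y, f x n y = f x y n := fun x y => h₂₃ x n y
  simp only [sum_range_succ, sum_add_distrib, h₁, h₂]
  abel

theorem fubiniPickFlat_comm_left (c : ℝ) (x y z : ℕ) :
    fubiniPickFlat c x y z = fubiniPickFlat c y x z := by
  simp only [fubiniPickFlat, min_left_comm x y z, max_left_comm x y z, add_comm x y]

theorem fubiniPickFlat_comm_right (c : ℝ) (x y z : ℕ) :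
    fubiniPickFlat c x y z = fubiniPickFlat c x z y := by
  simp only [fubiniPickFlat, min_comm y z, max_comm y z, add_right_comm x y z]

theorem fubiniPickFlat_eq_mul (c : ℝ) (x y z : ℕ) :
    fubiniPickFlat c x y z = fubiniPickFlat 1 x y z * c := by
  simp only [fubiniPickFlat]
  split_ifs <;> ring

theorem fubiniPickFlat_self (c : ℝ) (a : ℕ) :
    fubiniPickFlat c a a a = -(((a : ℝ) ^ 2 - 1) / (a : ℝ) ^ 2) * c := by
  simp [fubiniPickFlat]

theorem fubiniPickFlat_of_lt (c : ℝ) {a d : ℕ} (h : a < d) :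
    fubiniPickFlat c a a d = ((a + 1) / (a * d) : ℝ) * c := by
  have hmin : min a (min a d) = a := by omega
  have hmax : max a (max a d) = d := by omega
  have hmid : a + a + d - a - d = a := by omega
  simp only [fubiniPickFlat, hmin, hmax, hmid, if_neg h.ne, if_pos]

theorem fubiniPickFlat_eq_zero (c : ℝ) {x y z : ℕ} (hy : x < y) (hz : x < z) :
    fubiniPickFlat c x y z = 0 := by
  have hmin : min x (min y z) = x := by omega
  simp only [fubiniPickFlat, hmin]
  exact if_neg (by omega)

theorem invMetricFlat_eq_mul (c : ℝ) (l : ℕ) : invMetricFlat c l = invMetricFlat 1 l * c⁻¹ := by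
  simp only [invMetricFlat, mul_one, div_eq_mul_inv, mul_inv, mul_assoc]

noncomputable def pickSummand (c : ℝ) (l m v : ℕ) : ℝ :=
  invMetricFlat c l * invMetricFlat c m * invMetricFlat c v * fubiniPickFlat c l m v ^ 2

theorem pickSummand_comm_left (c : ℝ) (x y z : ℕ) : pickSummand c x y z = pickSummand c y x z := by
  rw [pickSummand, pickSummand, fubiniPickFlat_comm_left, mul_comm (invMetricFlat c x)]

theorem pickSummand_comm_right (c : ℝ) (x y z : ℕ) :
    pickSummand c x y z = pickSummand c x z y := by
  rw [pickSummand, pickSummand, fubiniPickFlat_comm_right, mul_right_comm (invMetricFlat c x)]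

theorem pickSummand_eq_inv_mul (c : ℝ) (l m v : ℕ) :
    pickSummand c l m v = c⁻¹ * pickSummand 1 l m v := by
  rcases eq_or_ne c 0 with rfl | hc
  · simp [pickSummand, invMetricFlat]
  · simp only [pickSummand, invMetricFlat_eq_mul c, fubiniPickFlat_eq_mul c]
    field_simp

theorem pickSummand_one_self {a : ℕ} (ha : 0 < a) :
    pickSummand 1 a a a = ((a : ℝ) - 1) ^ 2 / (a * (a + 1)) := by
  have : (a : ℝ) ≠ 0 := by positivity
  rw [pickSummand, fubiniPickFlat_self]
  simp only [invMetricFlat]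
  field_simp
  ring

theorem pickSummand_one_of_lt {a d : ℕ} (ha : 0 < a) (h : a < d) :
    pickSummand 1 a a d = 1 / (d * (d + 1)) := by
  have : (a : ℝ) ≠ 0 := by positivity
  have : (d : ℝ) ≠ 0 := Nat.cast_ne_zero.2 (by omega)
  rw [pickSummand, fubiniPickFlat_of_lt 1 h, invMetricFlat, invMetricFlat]
  field_simp

theorem pickSummand_eq_zero (c : ℝ) {x y z : ℕ} (hy : x < y) (hz : x < z) :
    pickSummand c x y z = 0 := by
  simp [pickSummand, fubiniPickFlat_eq_zero c hy hz]

theorem sum_pickSummand_one_face (n : ℕ) :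
    ∑ l ∈ range n, ∑ m ∈ range n, pickSummand 1 (l + 1) (m + 1) (n + 1) =
      n / ((n + 1) * (n + 2)) := by
  have hrow : ∀ l ∈ range n, ∑ m ∈ range n, pickSummand 1 (l + 1) (m + 1) (n + 1) =
      1 / ((n + 1) * (n + 2)) := by
    intro l hl
    rw [sum_eq_single_of_mem l hl]
    · rw [pickSummand_one_of_lt l.succ_pos (by simpa using hl)]
      push_cast
      ring
    · intro m hm hml
      rcases hml.lt_or_gt with hlt | hlt
      · rw [pickSummand_comm_left]
        exact pickSummand_eq_zero 1 (by omega) (by simp at hm; omega)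
      · exact pickSummand_eq_zero 1 (by omega) (by simp at hl; omega)
  rw [sum_congr rfl hrow, sum_const, card_range, nsmul_eq_mul]
  ring

theorem sum_pickSummand_edge (c : ℝ) (n : ℕ) :
    ∑ l ∈ range n, pickSummand c (l + 1) (n + 1) (n + 1) = 0 :=
  sum_eq_zero fun l hl => pickSummand_eq_zero c (by simp at hl; omega) (by simp at hl; omega)

theorem sum_pickSummand_one (n : ℕ) :
    ∑ l ∈ range n, ∑ m ∈ range n, ∑ v ∈ range n, pickSummand 1 (l + 1) (m + 1) (v + 1) =
      n * (n - 1) / (n + 1) := by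
  induction n with
  | zero => simp
  | succ n ih =>
    rw [sum_range_succ_cube_of_symmetric (fun l m v => pickSummand 1 (l + 1) (m + 1) (v + 1))
      (fun _ _ _ => pickSummand_comm_left ..) (fun _ _ _ => pickSummand_comm_right ..),
      ih, sum_pickSummand_one_face, sum_pickSummand_edge, pickSummand_one_self n.succ_pos,
      nsmul_eq_mul, smul_zero]
    push_cast
    have : (n : ℝ) + 2 ≠ 0 := by positivity
    field_simp
    ring

theorem pick_invariant_flat_affine_sphere_general (n₀ : ℕ) (hn : 2 ≤ n₀) (c : ℝ) :
    (1 / ((n₀ : ℝ) * ((n₀ : ℝ) - 1))) *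
      ∑ l : Fin n₀, ∑ m : Fin n₀, ∑ v : Fin n₀,
        invMetricFlat c (l.1 + 1) * invMetricFlat c (m.1 + 1) * invMetricFlat c (v.1 + 1) *
          (fubiniPickFlat c (l.1 + 1) (m.1 + 1) (v.1 + 1)) ^ 2 =
      1 / (((n₀ : ℝ) + 1) * c) := by
  change 1 / _ * ∑ l : Fin n₀, ∑ m : Fin n₀, ∑ v : Fin n₀,
    pickSummand c (l + 1) (m + 1) (v + 1) = _
  have hsum := sum_pickSummand_one n₀
  simp only [sum_range] at hsum
  simp only [pickSummand_eq_inv_mul c, ← mul_sum, hsum]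
  have hn₀ : (2 : ℝ) ≤ n₀ := by exact_mod_cast hn
  have : (n₀ : ℝ) ≠ 0 := (by linarith : (0 : ℝ) < n₀).ne'
  have : (n₀ : ℝ) - 1 ≠ 0 := (by linarith : (0 : ℝ) < n₀ - 1).ne'
  field_simp

/-- The Pick invariant of the flat hyperbolic affine hypersphere equals
`1/((n₀ + 1)·c)`, which is the negative of its affine mean curvature. -/
theorem pick_invariant_flat_affine_sphere (n₀ : ℕ) (hn : 2 ≤ n₀) (c : ℝ) (hc : 0 < c) :
    (1 / ((n₀ : ℝ) * ((n₀ : ℝ) - 1))) *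
      ∑ l : Fin n₀, ∑ m : Fin n₀, ∑ v : Fin n₀,
        invMetricFlat c (l.1 + 1) * invMetricFlat c (m.1 + 1) * invMetricFlat c (v.1 + 1) *
          (fubiniPickFlat c (l.1 + 1) (m.1 + 1) (v.1 + 1)) ^ 2 =
      1 / (((n₀ : ℝ) + 1) * c) :=
  pick_invariant_flat_affine_sphere_general n₀ hn c
end
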